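/- arXiv:2103.11665 — 3 statements merged into one kernel-verified Lean document; each statement's English description precedes it below -/
import Mathlib

section
/- Suppose n is even and A = {a_1,…,a_n} is a subset of F_q (q odd) such that the quadratic character values η(δ_A(a_i)) are all equal. Then there exist nonzero v_1,…,v_n in F_q with v_i^2 = λ·δ_A(a_i)^{-1} for some fixed λ ∈ F_q^*, such that the generalized Reed–Solomon code GRS_{n/2}(A, v) is Euclidean self-dual. In particular, a q-ary MDS self-dual code of length n exists. -/
/-!
Put `λ := δ_A(a₁)`. Since all `δ_A(aᵢ)` lie in the same square class of `F_q^*`, each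
`λ δ_A(aᵢ)⁻¹` is a square `vᵢ²`. For `f, g` of degree `< n/2` the product `fg` has degree
`< n - 1`, and `∑ᵢ δ_A(aᵢ)⁻¹ h(aᵢ)` is the coefficient of `x^{n-1}` in the Lagrange interpolant
of `h`, which vanishes for `deg h < n - 1`. Hence `GRS_{n/2}(A, v)` is self-orthogonal, and it
is self-dual because its dimension is `n/2`. A nonzero codeword comes from a nonzero polynomial of
degree `< k`, which has fewer than `k` roots among the `aᵢ`, so the code is MDS.
-/

open Finset

variable {F : Type*} [Field F]

/-- `δ_A(aᵢ)` for a listed set `a : Fin n → F`. -/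
noncomputable def delta {n : ℕ} (a : Fin n → F) (i : Fin n) : F :=
  ∏ j ∈ Finset.univ.erase i, (a i - a j)

/-- `δ_S(x)` for a finite set `S ⊆ F`. -/
noncomputable def deltaSet [DecidableEq F] (S : Finset F) (x : F) : F :=
  ∏ y ∈ S.erase x, (x - y)

/-- Euclidean dual of a linear code. -/
def dualCode {n : ℕ} (C : Submodule F (Fin n → F)) : Submodule F (Fin n → F) where
  carrier := {x | ∀ y ∈ C, ∑ i, x i * y i = 0}
  add_mem' := by
    intro x y hx hy z hz
    simp [add_mul, Finset.sum_add_distrib, hx z hz, hy z hz]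
  zero_mem' := by intro y hy; simp
  smul_mem' := by
    intro c x hx y hy
    simp [smul_eq_mul, mul_assoc, ← Finset.mul_sum, hx y hy]

/-- Hamming weight. -/
noncomputable def wt {n : ℕ} (c : Fin n → F) : ℕ := Nat.card {i // c i ≠ 0}

/-- `C` is an `[n, k, n-k+1]` MDS code. -/
noncomputable def IsMDSCode {n : ℕ} (C : Submodule F (Fin n → F)) (k : ℕ) : Prop :=
  Module.finrank F C = k ∧ ∀ c ∈ C, c ≠ 0 → n - k + 1 ≤ wt c

noncomputable def GRSmap {n : ℕ} (a v : Fin n → F) : Polynomial F →ₗ[F] (Fin n → F) where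
  toFun f := fun i => v i * Polynomial.eval (a i) f
  map_add' f g := by funext i; simp [mul_add]
  map_smul' c f := by funext i; simp [Polynomial.eval_smul]; ring

/-- Generalized Reed–Solomon code `GRS_k(A, v)`. -/
noncomputable def GRS {n : ℕ} (k : ℕ) (a v : Fin n → F) : Submodule F (Fin n → F) :=
  Submodule.map (GRSmap a v) (Polynomial.degreeLT F k)

noncomputable def GRSextMap {n : ℕ} (k : ℕ) (a v : Fin n → F) :
    Polynomial F →ₗ[F] (Fin (n+1) → F) where
  toFun f := fun i =>
    if h : (i : ℕ) < n then v ⟨i, h⟩ * Polynomial.eval (a ⟨i, h⟩) f else f.coeff (k - 1)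
  map_add' f g := by
    funext i
    by_cases h : (i : ℕ) < n <;> simp [h, mul_add]
  map_smul' c f := by
    funext i
    by_cases h : (i : ℕ) < n <;> simp [h, Polynomial.eval_smul] <;> ring

/-- Extended generalized Reed–Solomon code `GRS_k(A ∪ {∞}, v)`. -/
noncomputable def GRSext {n : ℕ} (k : ℕ) (a v : Fin n → F) : Submodule F (Fin (n+1) → F) :=
  Submodule.map (GRSextMap k a v) (Polynomial.degreeLT F k)

open Polynomial

lemma isSquare_mul_inv_of_isSquare_iff [Fintype F] {x y : F}
    (hx : x ≠ 0) (hy : y ≠ 0) (h : IsSquare x ↔ IsSquare y) : IsSquare (x * y⁻¹) := by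
  classical
  have hχ : quadraticChar F x = quadraticChar F y := by
    by_cases hsq : IsSquare x
    · rw [(quadraticChar_one_iff_isSquare hx).2 hsq,
        (quadraticChar_one_iff_isSquare hy).2 (h.1 hsq)]
    · rw [quadraticChar_neg_one_iff_not_isSquare.2 hsq,
        quadraticChar_neg_one_iff_not_isSquare.2 (h.not.1 hsq)]
  refine (quadraticChar_one_iff_isSquare (mul_ne_zero hx (inv_ne_zero hy))).1 ?_
  rw [map_mul, hχ, ← map_mul, mul_inv_cancel₀ hy, map_one]

lemma exists_isSquare_mul_inv {ι : Type*} [Fintype F] (δ : ι → F)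
    (hδ : ∀ i, δ i ≠ 0) (h : ∀ i j, IsSquare (δ i) ↔ IsSquare (δ j)) :
    ∃ lam : F, lam ≠ 0 ∧ ∀ i, IsSquare (lam * (δ i)⁻¹) := by
  cases isEmpty_or_nonempty ι with
  | inl _ => exact ⟨1, one_ne_zero, isEmptyElim⟩
  | inr hι =>
    obtain ⟨i₀⟩ := hι
    exact ⟨δ i₀, hδ i₀, fun i => isSquare_mul_inv_of_isSquare_iff (hδ i₀) (hδ i) (h i₀ i)⟩

lemma Polynomial.degree_mul_lt_of_mem_degreeLT {R : Type*} [Semiring R] {k : ℕ} {f g : R[X]}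
    (hf : f ∈ degreeLT R k) (hg : g ∈ degreeLT R k) :
    (f * g).degree < ((2 * k - 1 : ℕ) : WithBot ℕ) := by
  rcases eq_or_ne f 0 with rfl | hf0
  · simp
  rcases eq_or_ne g 0 with rfl | hg0
  · simp
  have hfk := (natDegree_lt_iff_degree_lt hf0).2 (mem_degreeLT.1 hf)
  have hgk := (natDegree_lt_iff_degree_lt hg0).2 (mem_degreeLT.1 hg)
  calc (f * g).degree ≤ f.degree + g.degree := degree_mul_le f g
    _ = ((f.natDegree + g.natDegree : ℕ) : WithBot ℕ) := by
      rw [degree_eq_natDegree hf0, degree_eq_natDegree hg0, Nat.cast_add]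
    _ < ((2 * k - 1 : ℕ) : WithBot ℕ) := by exact_mod_cast (by omega)

section Delta

variable {n : ℕ} (a : Fin n ↪ F)

lemma delta_ne_zero (i : Fin n) : delta a i ≠ 0 :=
  prod_ne_zero_iff.2 fun _ hj => sub_ne_zero.2 (a.injective.ne (ne_of_mem_erase hj).symm)

lemma sum_inv_delta_mul_eval_eq_zero {p : F[X]} (hp : p.degree < ((n - 1 : ℕ) : WithBot ℕ)) :
    ∑ i, (delta a i)⁻¹ * p.eval (a i) = 0 := by
  classical
  have hinj : Set.InjOn a (univ : Finset (Fin n)) := a.injective.injOn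
  have hp' : p.degree < #(univ : Finset (Fin n)) := by
    rw [card_univ, Fintype.card_fin]
    exact hp.trans_le (by exact_mod_cast n.sub_le 1)
  have hcoeff := congrArg (coeff · (n - 1)) (Lagrange.eq_interpolate hinj hp')
  simp only [coeff_eq_zero_of_degree_lt hp, Lagrange.interpolate_apply, finsetSum_coeff,
    coeff_C_mul] at hcoeff
  rw [hcoeff]
  refine sum_congr rfl fun i _ => ?_
  have hdeg : (Lagrange.basis univ a i).natDegree = n - 1 := by
    rw [Lagrange.natDegree_basis hinj (mem_univ i), card_univ, Fintype.card_fin]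
  rw [← hdeg, coeff_natDegree, Lagrange.leadingCoeff_basis hinj (mem_univ i), mul_comm]
  rfl

end Delta

lemma finrank_dualCode {n : ℕ} (C : Submodule F (Fin n → F)) :
    Module.finrank F (dualCode C) = n - Module.finrank F C := by
  let B : LinearMap.BilinForm F (Fin n → F) := dotProductBilin F F
  have hker : LinearMap.ker B = ⊥ :=
    LinearMap.ker_eq_bot'.2 fun x hx => dotProduct_eq_zero x (LinearMap.congr_fun hx)
  have hdual : dualCode C = B.orthogonal C := by
    ext x
    refine forall₂_congr fun y _ => ?_
    simp [B, dotProduct, mul_comm]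
  have := B.finrank_add_finrank_orthogonal' C
  rw [hker, inf_bot_eq, finrank_bot, Module.finrank_fin_fun] at this
  rw [hdual]
  omega

section GRS

variable {n k : ℕ} (a : Fin n ↪ F) {v : Fin n → F}

lemma GRSmap_apply (f : F[X]) (i : Fin n) : GRSmap a v f i = v i * f.eval (a i) := rfl

lemma card_filter_eval_eq_zero_lt [DecidableEq F] {f : F[X]} (hf : f ∈ degreeLT F k) (hf0 : f ≠ 0) :
    #{i | f.eval (a i) = 0} < k := by
  by_contra! hk
  exact hf0 <| eq_zero_of_degree_lt_of_eval_index_eq_zero _ a.injective.injOn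
    ((mem_degreeLT.1 hf).trans_le (by exact_mod_cast hk)) fun i hi => (mem_filter.1 hi).2

lemma wt_GRSmap [DecidableEq F] (hv : ∀ i, v i ≠ 0) (f : F[X]) :
    wt (GRSmap a v f) = #{i | f.eval (a i) ≠ 0} := by
  rw [wt, Nat.card_eq_fintype_card, Fintype.card_subtype]
  simp only [GRSmap_apply, ne_eq, mul_eq_zero, hv, false_or]

lemma finrank_GRS (hk : k ≤ n) (hv : ∀ i, v i ≠ 0) : Module.finrank F (GRS k a v) = k := by
  classical
  have hinj : Function.Injective ((GRSmap a v).comp (degreeLT F k).subtype) := by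
    rw [← LinearMap.ker_eq_bot, LinearMap.ker_eq_bot']
    rintro ⟨f, hf⟩ h0
    by_contra hf0
    have hzero : #{i | f.eval (a i) = 0} = n := by
      rw [filter_true_of_mem fun i _ => ?_, card_univ, Fintype.card_fin]
      simpa [GRSmap_apply, hv i] using congrFun h0 i
    have := card_filter_eval_eq_zero_lt a hf (by simpa using hf0)
    omega
  rw [GRS, ← Submodule.range_subtype (degreeLT F k), ← LinearMap.range_comp,
    LinearMap.finrank_range_of_inj hinj, (degreeLTEquiv F k).finrank_eq, Module.finrank_fin_fun]

theorem isMDSCode_GRS (hk : k ≤ n) (hv : ∀ i, v i ≠ 0) : IsMDSCode (GRS k a v) k := by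
  classical
  refine ⟨finrank_GRS a hk hv, ?_⟩
  rintro _ ⟨f, hf, rfl⟩ hc0
  have hf0 : f ≠ 0 := by rintro rfl; exact hc0 (map_zero _)
  have hroots := card_filter_eval_eq_zero_lt a hf hf0
  have hsplit := card_filter_add_card_filter_not (s := univ) (fun i => f.eval (a i) = 0)
  rw [card_univ, Fintype.card_fin] at hsplit
  rw [wt_GRSmap a hv]
  simp only [ne_eq]
  omega

lemma GRS_le_dualCode (hkn : 2 * k ≤ n) {lam : F}
    (hv : ∀ i, v i ^ 2 = lam * (delta a i)⁻¹) : GRS k a v ≤ dualCode (GRS k a v) := by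
  rintro _ ⟨f, hf, rfl⟩ _ ⟨g, hg, rfl⟩
  have hfg : (f * g).degree < ((n - 1 : ℕ) : WithBot ℕ) :=
    (degree_mul_lt_of_mem_degreeLT hf hg).trans_le (by exact_mod_cast (by omega))
  calc ∑ i, GRSmap a v f i * GRSmap a v g i
      = lam * ∑ i, (delta a i)⁻¹ * (f * g).eval (a i) := by
        rw [mul_sum]
        refine sum_congr rfl fun i _ => ?_
        rw [GRSmap_apply, GRSmap_apply, eval_mul]
        linear_combination (f.eval (a i) * g.eval (a i)) * hv i
    _ = 0 := by rw [sum_inv_delta_mul_eval_eq_zero a hfg, mul_zero]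

theorem GRS_eq_dualCode (hkn : 2 * k = n) {lam : F} (hv : ∀ i, v i ^ 2 = lam * (delta a i)⁻¹)
    (hv0 : ∀ i, v i ≠ 0) : GRS k a v = dualCode (GRS k a v) := by
  refine Submodule.eq_of_le_of_finrank_le (GRS_le_dualCode a hkn.le hv) ?_
  rw [finrank_dualCode, finrank_GRS a (by omega) hv0]
  omega

end GRS

theorem stmt2_general {F : Type*} [Field F] [Fintype F]
    {n : ℕ} (hn : Even n) (a : Fin n ↪ F)
    (hη : ∀ i j : Fin n, IsSquare (delta ⇑a i) ↔ IsSquare (delta ⇑a j)) :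
    ∃ v : Fin n → F, (∀ i, v i ≠ 0) ∧
      (∃ lam : F, lam ≠ 0 ∧ ∀ i, v i ^ 2 = lam * (delta ⇑a i)⁻¹) ∧
      GRS (n / 2) ⇑a v = dualCode (GRS (n / 2) ⇑a v) ∧
      IsMDSCode (GRS (n / 2) ⇑a v) (n / 2) := by
  obtain ⟨lam, hlam, hsq⟩ := exists_isSquare_mul_inv (delta a) (delta_ne_zero a) hη
  choose v hv using hsq
  have hv2 : ∀ i, v i ^ 2 = lam * (delta a i)⁻¹ := fun i => (sq (v i)).trans (hv i).symm
  have hv0 : ∀ i, v i ≠ 0 := fun i h0 => by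
    simpa [h0, hlam, delta_ne_zero a i] using hv2 i
  have hn2 : 2 * (n / 2) = n := Nat.two_mul_div_two_of_even hn
  exact ⟨v, hv0, ⟨lam, hlam, hv2⟩, GRS_eq_dualCode a hn2 hv2 hv0, isMDSCode_GRS a (by omega) hv0⟩

/-- Lemma 2: if `n` is even and all `η(δ_A(aᵢ))` agree, there is a vector `v` with
`vᵢ² = λ δ_A(aᵢ)⁻¹` making `GRS_{n/2}(A, v)` Euclidean self-dual; in particular a
`q`-ary MDS self-dual code of length `n` exists. -/
theorem stmt2 {F : Type*} [Field F] [Fintype F] (hodd : Odd (Fintype.card F))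
    {n : ℕ} (hn : Even n) (a : Fin n ↪ F)
    (hη : ∀ i j : Fin n, IsSquare (delta ⇑a i) ↔ IsSquare (delta ⇑a j)) :
    ∃ v : Fin n → F, (∀ i, v i ≠ 0) ∧
      (∃ lam : F, lam ≠ 0 ∧ ∀ i, v i ^ 2 = lam * (delta ⇑a i)⁻¹) ∧
      GRS (n / 2) ⇑a v = dualCode (GRS (n / 2) ⇑a v) ∧
      IsMDSCode (GRS (n / 2) ⇑a v) (n / 2) :=
  stmt2_general hn a hη
end

section
/- Let q = r^2 with r odd, θ a primitive element of F_q, and a, b divisors of q-1 with 2b | a(r-1). Set α = θ^a and γ = θ^{a/2} (a even). Then for all integers j, h, the element α^{j(q-1)/b} - γ^{(2h+1)(q-1)/b} lies in the subfield F_r, and hence is a square in F_q whenever it is nonzero. -/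
/-!
Every exponent `e` occurring in `x` satisfies `(q - 1) ∣ e (r - 1)`, since `2b ∣ a (r - 1)`;
hence each power `θ ^ e` is fixed by `y ↦ y ^ r`, and so is their difference because `r` is a
power of the characteristic. A nonzero `x` with `x ^ (r - 1) = 1` is a square by Euler's
criterion, as `(q - 1) / 2 = (r - 1) (r + 1) / 2`.
-/

namespace FiniteField

variable {F : Type*} [Field F] [Fintype F]

theorem sub_pow_of_dvd_card {r : ℕ} (hr : r ∣ Fintype.card F) (x y : F) :
    (x - y) ^ r = x ^ r - y ^ r := by
  obtain ⟨n, hp, hcard⟩ := card F (ringChar F)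
  have : Fact (ringChar F).Prime := ⟨hp⟩
  obtain ⟨m, -, rfl⟩ := (Nat.dvd_prime_pow hp).mp (hcard ▸ hr)
  exact sub_pow_char_pow x y m

theorem units_pow_pow_eq_self_of_dvd (u : Fˣ) {e r : ℕ} (hr : r ≠ 0)
    (hdvd : Fintype.card F - 1 ∣ e * (r - 1)) : ((u : F) ^ e) ^ r = (u : F) ^ e := by
  obtain ⟨k, hk⟩ := hdvd
  have hone : (u : F) ^ (e * (r - 1)) = 1 := by
    rw [hk, pow_mul, pow_card_sub_one_eq_one _ u.ne_zero, one_pow]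
  calc ((u : F) ^ e) ^ r = (u : F) ^ (e * (r - 1)) * (u : F) ^ e := by
        rw [← pow_mul, ← pow_add, ← Nat.mul_succ, Nat.succ_eq_add_one, Nat.sub_add_cancel
          (Nat.one_le_iff_ne_zero.mpr hr)]
    _ = (u : F) ^ e := by rw [hone, one_mul]

theorem isSquare_of_pow_eq_self {r : ℕ} (hcard : Fintype.card F = r ^ 2) (hr : Odd r)
    {x : F} (hx : x ^ r = x) (hx0 : x ≠ 0) : IsSquare x := by
  have hchar : ringChar F ≠ 2 := by
    rw [Ne, even_card_iff_char_two, hcard, ← Nat.even_iff, Nat.not_even_iff_odd]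
    exact hr.pow
  have hxr : x ^ (r - 1) = 1 := by
    apply mul_left_cancel₀ hx0
    rw [mul_one, ← pow_succ', Nat.sub_add_cancel hr.pos, hx]
  obtain ⟨k, rfl⟩ := hr
  have hhalf : (2 * k + 1) ^ 2 / 2 = (2 * k + 1 - 1) * (k + 1) := by
    rw [Nat.add_sub_cancel, show (2 * k + 1) ^ 2 = 2 * (2 * k * (k + 1)) + 1 by ring,
      Nat.mul_add_div two_pos]
    rfl
  rw [isSquare_iff hchar hx0, hcard, hhalf, pow_mul, hxr, one_pow]

end FiniteField

open FiniteField in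
theorem stmt10_general {F : Type*} [Field F] [Fintype F] {q r : ℕ} (hq : Fintype.card F = q)
    (hq2 : q = r ^ 2) (hr : Odd r) (θ : Fˣ)
    {a b : ℕ} (hb : b ∣ q - 1) (hae : Even a)
    (hba : 2 * b ∣ a * (r - 1)) (j h : ℕ) :
    ∀ x : F,
      x = ((θ : F) ^ a) ^ (j * ((q - 1) / b))
            - ((θ : F) ^ (a / 2)) ^ ((2 * h + 1) * ((q - 1) / b)) →
      x ^ r = x ∧ (x ≠ 0 → IsSquare x) := by
  intro x hx
  set c := (q - 1) / b
  have hbc : b * c = q - 1 := Nat.mul_div_cancel' hb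
  have hb_dvd : b ∣ a / 2 * (r - 1) := by
    rw [← Nat.two_mul_div_two_of_even hae, mul_assoc] at hba
    exact Nat.dvd_of_mul_dvd_mul_left two_pos hba
  have hfixed (k : ℕ) : ((θ : F) ^ (a / 2 * (k * c))) ^ r = (θ : F) ^ (a / 2 * (k * c)) := by
    refine units_pow_pow_eq_self_of_dvd θ hr.pos.ne' ?_
    rw [hq, ← hbc, show a / 2 * (k * c) * (r - 1) = a / 2 * (r - 1) * c * k by ring]
    exact (Nat.mul_dvd_mul_right hb_dvd c).mul_right k
  have hx' : x = (θ : F) ^ (a / 2 * (2 * j * c)) - (θ : F) ^ (a / 2 * ((2 * h + 1) * c)) := by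
    rw [hx, ← pow_mul, ← pow_mul]
    congr 2
    conv_lhs => rw [← Nat.two_mul_div_two_of_even hae]
    ring
  have hxr : x ^ r = x := by
    rw [hx', sub_pow_of_dvd_card (hq ▸ hq2 ▸ Dvd.intro_left _ (sq r).symm), hfixed, hfixed]
  exact ⟨hxr, isSquare_of_pow_eq_self (hq.trans hq2) hr hxr⟩

/-- Let `q = r²` with `r` odd, `θ` primitive, `a, b ∣ q - 1`, `a` even, `2b ∣ a(r-1)`,
`α = θ^a`, `γ = θ^{a/2}`. Then `α^{j(q-1)/b} - γ^{(2h+1)(q-1)/b}` lies in the subfield `F_r`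
(it is fixed by the Frobenius `x ↦ x^r`), hence is a square in `F_q` whenever nonzero. -/
theorem stmt10 {F : Type*} [Field F] [Fintype F] {q r : ℕ} (hq : Fintype.card F = q)
    (hq2 : q = r ^ 2) (hr : Odd r) (θ : Fˣ) (hθ : ∀ x : Fˣ, x ∈ Subgroup.zpowers θ)
    {a b : ℕ} (ha : a ∣ q - 1) (hb : b ∣ q - 1) (hae : Even a)
    (hba : 2 * b ∣ a * (r - 1)) (j h : ℕ) :
    ∀ x : F,
      x = ((θ : F) ^ a) ^ (j * ((q - 1) / b))
            - ((θ : F) ^ (a / 2)) ^ ((2 * h + 1) * ((q - 1) / b)) →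
      x ^ r = x ∧ (x ≠ 0 → IsSquare x) :=
  stmt10_general hq hq2 hr θ hb hae hba j h
end

section
/- Let q = r^2 with r odd, θ a primitive element of F_q, and a, b even divisors of q-1 with 2a | b(r+1). Set β = θ^b and fix 0 ≤ i ≤ s-1 and 1 ≤ j ≤ (q-1)/a. Then the element w = ∏_{h=0}^{s-1}(β^{j(q-1)/a} + β^{h(q-1)/a}), if nonzero, is a square in F_q^*. -/
/-!
With `γ = β ^ ((q - 1) / a)`, the hypothesis `2a ∣ b(r + 1)` gives `γ ^ ((r + 1) / 2) = 1`,
so every factor is `x + y` with `x ^ ((r + 1) / 2) = y ^ ((r + 1) / 2) = 1`. On such elements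
the Frobenius `z ↦ z ^ r` of `𝔽_{r²} / 𝔽_r` is inversion, hence `(x + y) ^ (r - 1)` equals
`(x * y)⁻¹` and `(x + y) ^ ((q - 1) / 2) = (x * y) ^ (-(r + 1) / 2) = 1`: by Euler's criterion
`x + y` is a square.
-/

namespace FiniteField

variable {F : Type*} [Field F] [Fintype F]

theorem add_pow_of_dvd_card {r : ℕ} (hr : r ∣ Fintype.card F) (x y : F) :
    (x + y) ^ r = x ^ r + y ^ r := by
  obtain ⟨n, hp, hcard⟩ := FiniteField.card F (ringChar F)
  have := Fact.mk hp
  obtain ⟨m, -, rfl⟩ := (Nat.dvd_prime_pow hp).mp (hcard ▸ hr)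
  exact add_pow_char_pow x y (ringChar F) m

theorem pow_pow_div_pow_eq_one {z : F} (hz : z ≠ 0) {a b n : ℕ}
    (ha : a ∣ Fintype.card F - 1) (hab : a ∣ b * n) :
    ((z ^ b) ^ ((Fintype.card F - 1) / a)) ^ n = 1 := by
  obtain ⟨t, ht⟩ := hab
  calc ((z ^ b) ^ ((Fintype.card F - 1) / a)) ^ n
      = z ^ ((Fintype.card F - 1) / a * a * t) := by
        rw [← pow_mul, ← pow_mul, mul_assoc, mul_comm, mul_assoc, mul_comm n, ht]
    _ = 1 := by rw [Nat.div_mul_cancel ha, pow_mul, pow_card_sub_one_eq_one z hz, one_pow]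

theorem isSquare_add_of_pow_eq_one {r : ℕ} (hq : Fintype.card F = r ^ 2) (hr : Odd r) {x y : F}
    (hx : x ^ ((r + 1) / 2) = 1) (hy : y ^ ((r + 1) / 2) = 1) : IsSquare (x + y) := by
  obtain ⟨k, rfl⟩ := hr
  rw [show (2 * k + 1 + 1) / 2 = k + 1 by omega] at hx hy
  rcases eq_or_ne (x + y) 0 with hxy | hxy
  · rw [hxy]; exact IsSquare.zero
  have hchar : ringChar F ≠ 2 := by
    rw [Ne, even_card_iff_char_two, hq, Nat.odd_iff.mp (odd_two_mul_add_one k).pow]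
    exact Nat.one_ne_zero
  have frob_eq_inv : ∀ z : F, z ^ (k + 1) = 1 → z ^ (2 * k + 1) = z⁻¹ := fun z hz =>
    eq_inv_of_mul_eq_one_left (by rw [← pow_succ, show 2 * k + 1 + 1 = (k + 1) * 2 by ring,
      pow_mul, hz, one_pow])
  have hx0 : x ≠ 0 := by rintro rfl; simp at hx
  have hy0 : y ≠ 0 := by rintro rfl; simp at hy
  have hfrob : (x + y) ^ (2 * k) * (x + y) = (x * y)⁻¹ * (x + y) := by
    rw [← pow_succ, add_pow_of_dvd_card ⟨2 * k + 1, by rw [hq]; ring⟩, frob_eq_inv x hx,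
      frob_eq_inv y hy]
    field_simp
    ring
  have hcard : Fintype.card F / 2 = 2 * k * (k + 1) := by
    rw [hq, show (2 * k + 1) ^ 2 = 2 * (2 * k * (k + 1)) + 1 by ring, Nat.mul_add_div two_pos,
      Nat.add_eq_left]
    rfl
  rw [isSquare_iff hchar hxy, hcard, pow_mul, mul_right_cancel₀ hxy hfrob, inv_pow, mul_pow, hx,
    hy, one_mul, inv_one]

end FiniteField

theorem stmt19_general {F : Type*} [Field F] [Fintype F] {q r : ℕ} (hq : Fintype.card F = q)
    (hq2 : q = r ^ 2) (hr : Odd r) (θ : Fˣ)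
    {a b : ℕ} (ha : a ∣ q - 1)
    (hab : 2 * a ∣ b * (r + 1))
    {s j : ℕ} :
    IsSquare (∏ h ∈ Finset.range s,
      (((θ : F) ^ b) ^ (j * ((q - 1) / a)) + ((θ : F) ^ b) ^ (h * ((q - 1) / a)))) := by
  subst hq
  have hab' : a ∣ b * ((r + 1) / 2) := by
    rw [← Nat.mul_dvd_mul_iff_left two_pos, mul_left_comm,
      Nat.mul_div_cancel' (even_iff_two_dvd.mp hr.add_one)]
    exact hab
  have hγ := FiniteField.pow_pow_div_pow_eq_one θ.ne_zero ha hab'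
  refine Finset.isSquare_prod _ fun h _ => ?_
  rw [pow_mul', pow_mul']
  apply FiniteField.isSquare_add_of_pow_eq_one hq2 hr <;>
    rw [← pow_mul, mul_comm, pow_mul, hγ, one_pow]

/-- Let `q = r²` with `r` odd, `θ` primitive, `a, b` even divisors of `q-1` with
`2a ∣ b(r+1)`, `β = θ^b`, and fix `0 ≤ i ≤ s - 1`, `1 ≤ j ≤ (q-1)/a`. Then
`w = ∏_{h=0}^{s-1} (β^{j(q-1)/a} + β^{h(q-1)/a})`, if nonzero, is a square in `F_q^*`. -/
theorem stmt19 {F : Type*} [Field F] [Fintype F] {q r : ℕ} (hq : Fintype.card F = q)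
    (hq2 : q = r ^ 2) (hr : Odd r) (θ : Fˣ) (hθ : ∀ x : Fˣ, x ∈ Subgroup.zpowers θ)
    {a b : ℕ} (hae : Even a) (hbe : Even b) (ha : a ∣ q - 1) (hb : b ∣ q - 1)
    (hab : 2 * a ∣ b * (r + 1))
    {s i j : ℕ} (hi : i ≤ s - 1) (hj1 : 1 ≤ j) (hj2 : j ≤ (q - 1) / a)
    (hw : (∏ h ∈ Finset.range s,
        (((θ : F) ^ b) ^ (j * ((q - 1) / a)) + ((θ : F) ^ b) ^ (h * ((q - 1) / a)))) ≠ 0) :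
    IsSquare (∏ h ∈ Finset.range s,
      (((θ : F) ^ b) ^ (j * ((q - 1) / a)) + ((θ : F) ^ b) ^ (h * ((q - 1) / a)))) :=
  stmt19_general hq hq2 hr θ ha hab
end
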